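/- Let μ be a Borel probability measure on ℝⁿ with full support, and let (T_r)_{r∈ℝ} be the flow of the linear ODE z' = Mz where M ∈ ℝⁿˣⁿ has at least one eigenvalue with nonzero real part. Then μ is not invariant under the flow, i.e., there exist r ∈ ℝ and a Borel set A with μ(T_r⁻¹(A)) ≠ μ(A). -/

import Mathlib

/-!
If `w` is a left eigenvector of `M` for an eigenvalue `c`, the linear functional
`φ x = w ⬝ᵥ x` satisfies `(φ ∘ T_r)' = c (φ ∘ T_r)` along every trajectory, so
`|φ ∘ T_r| = e^{r Re c} |φ|`. Since `Re c ≠ 0`, flow invariance makes `μ {|φ| > t}` independent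
of `t > 0`; letting `t → ∞` shows it vanishes, so the nonempty open set `{φ ≠ 0}` is `μ`-null.
-/

open MeasureTheory Filter Matrix

theorem Matrix.exists_vecMul_eq_smul_of_mem_spectrum {K ι : Type*} [Field K] [Fintype ι]
    [DecidableEq ι] {A : Matrix ι ι K} {c : K} (hc : c ∈ spectrum K A) :
    ∃ w ≠ 0, w ᵥ* A = c • w := by
  have hdet : (algebraMap K (Matrix ι ι K) c - A).det = 0 := by
    rwa [spectrum.mem_iff, Matrix.isUnit_iff_isUnit_det, isUnit_iff_ne_zero, not_not] at hc
  obtain ⟨w, hw0, hw⟩ := Matrix.exists_vecMul_eq_zero_iff.2 hdet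
  refine ⟨w, hw0, ?_⟩
  rw [Matrix.vecMul_sub, Algebra.algebraMap_eq_smul_one, Matrix.vecMul_smul, Matrix.vecMul_one,
    sub_eq_zero] at hw
  exact hw.symm

theorem eq_cexp_mul_of_hasDerivAt {f : ℝ → ℂ} {c : ℂ} (hf : ∀ r, HasDerivAt f (c * f r) r)
    (r : ℝ) : f r = Complex.exp (c * r) * f 0 := by
  set g : ℝ → ℂ := fun s => Complex.exp (-(c * s)) * f s
  have hg : ∀ s, HasDerivAt g 0 s := fun s => by
    have he : HasDerivAt (fun u : ℝ => -(c * u)) (-c) s := by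
      simpa using ((hasDerivAt_id s).ofReal_comp.const_mul c).fun_neg
    exact (he.cexp.fun_mul (hf s)).congr_deriv (by ring)
  have hconst : g r = g 0 :=
    is_const_of_deriv_eq_zero (fun s => (hg s).differentiableAt) (fun s => (hg s).deriv) r 0
  simp only [g, Complex.ofReal_zero, mul_zero, neg_zero, Complex.exp_zero, one_mul] at hconst
  rw [← hconst, ← mul_assoc, ← Complex.exp_add, add_neg_cancel, Complex.exp_zero, one_mul]

section LeftEigenvector

variable {ι : Type*} [Fintype ι]

theorem hasDerivAt_dotProduct_of_vecMul_eq_smul {M : Matrix ι ι ℝ} {w : ι → ℂ} {c : ℂ}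
    (hw : w ᵥ* M.map (algebraMap ℝ ℂ) = c • w) {γ : ℝ → ι → ℝ} {r : ℝ}
    (hγ : HasDerivAt γ (M *ᵥ γ r) r) :
    HasDerivAt (fun s => w ⬝ᵥ (algebraMap ℝ ℂ ∘ γ s)) (c * (w ⬝ᵥ (algebraMap ℝ ℂ ∘ γ r))) r := by
  have hmap : algebraMap ℝ ℂ ∘ (M *ᵥ γ r) = M.map (algebraMap ℝ ℂ) *ᵥ (algebraMap ℝ ℂ ∘ γ r) :=
    funext (RingHom.map_mulVec _ M (γ r))
  have hderiv : HasDerivAt (fun s => w ⬝ᵥ (algebraMap ℝ ℂ ∘ γ s))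
      (w ⬝ᵥ (algebraMap ℝ ℂ ∘ (M *ᵥ γ r))) r :=
    HasDerivAt.fun_sum fun i _ => (hasDerivAt_pi.1 hγ i).ofReal_comp.const_mul (w i)
  rwa [hmap, Matrix.dotProduct_mulVec, hw, smul_dotProduct, smul_eq_mul] at hderiv

theorem exists_dotProduct_algebraMap_ne_zero [DecidableEq ι] {w : ι → ℂ} (hw : w ≠ 0) :
    ∃ x : ι → ℝ, w ⬝ᵥ (algebraMap ℝ ℂ ∘ x) ≠ 0 := by
  obtain ⟨j, hj⟩ := Function.ne_iff.1 hw
  exact ⟨Pi.single j 1, by simpa [dotProduct, Pi.single_apply, apply_ite Complex.ofReal] using hj⟩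

end LeftEigenvector

section ScalingInvariant

variable {X : Type*} [MeasurableSpace X] {μ : Measure X} [IsFiniteMeasure μ]

theorem measure_pos_eq_zero_of_measure_lt_eq {g : X → ℝ} (hg : Measurable g)
    (h : ∀ s t, 0 < s → 0 < t → μ {x | s < g x} = μ {x | t < g x}) :
    μ {x | 0 < g x} = 0 := by
  have hmeas : ∀ t : ℝ, MeasurableSet {x | t < g x} := fun t =>
    measurableSet_lt measurable_const hg
  have hone : μ {x | 1 < g x} = 0 := by
    have hlim : Tendsto (fun k : ℕ => μ {x | (k : ℝ) < g x}) atTop (nhds 0) := by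
      have hempty : (⋂ k : ℕ, {x | (k : ℝ) < g x}) = ∅ :=
        Set.eq_empty_of_forall_notMem fun x hx =>
          (exists_nat_ge (g x)).elim fun k hk => (Set.mem_iInter.1 hx k).not_ge hk
      rw [← measure_empty (μ := μ), ← hempty]
      exact tendsto_measure_iInter_atTop (fun k => (hmeas k).nullMeasurableSet)
        (fun i j hij x (hx : (j : ℝ) < g x) => (Nat.cast_le.2 hij).trans_lt hx)
        ⟨0, measure_ne_top μ _⟩
    refine tendsto_nhds_unique (tendsto_const_nhds.congr' ?_) hlim
    filter_upwards [eventually_ge_atTop 1] with k hk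
    exact h 1 k one_pos (by exact_mod_cast hk)
  have hunion : {x | 0 < g x} = ⋃ k : ℕ, {x | 1 / ((k : ℝ) + 1) < g x} := by
    ext x
    simp only [Set.mem_ofPred_eq, Set.mem_iUnion]
    exact ⟨exists_nat_one_div_lt, fun ⟨k, hk⟩ => lt_trans (by positivity) hk⟩
  rw [hunion]
  exact measure_iUnion_null fun k => (h _ 1 (by positivity) one_pos).trans hone

theorem measure_pos_eq_zero_of_invariant_of_scaling {T : ℝ → X → X}
    (hinv : ∀ r A, MeasurableSet A → μ (T r ⁻¹' A) = μ A) {g : X → ℝ} (hg : Measurable g)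
    {a : ℝ} (ha : a ≠ 0) (hscale : ∀ r x, g (T r x) = Real.exp (a * r) * g x) :
    μ {x | 0 < g x} = 0 := by
  refine measure_pos_eq_zero_of_measure_lt_eq hg fun s t hs ht => ?_
  have hr : Real.exp (a * (Real.log (t / s) / a)) = t / s := by
    rw [mul_div_cancel₀ _ ha, Real.exp_log (by positivity)]
  have hpre : T (Real.log (t / s) / a) ⁻¹' {x | t < g x} = {x | s < g x} := by
    ext x
    simp only [Set.mem_preimage, Set.mem_ofPred_eq, hscale, hr, div_mul_eq_mul_div,
      lt_div_iff₀ hs]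
    exact mul_lt_mul_iff_of_pos_left ht
  rw [← hpre]
  exact hinv _ _ (measurableSet_lt measurable_const hg)

end ScalingInvariant

/-- A fully supported Borel probability measure on `ℝⁿ` cannot be
invariant under the flow of the linear ODE `z' = M z` when `M` has an eigenvalue
with nonzero real part: some flow map `T_r` moves the measure of some Borel set. -/
theorem stmt5 {n : ℕ} (μ : Measure (Fin n → ℝ)) [IsProbabilityMeasure μ]
    (hsupp : ∀ U : Set (Fin n → ℝ), IsOpen U → U.Nonempty → μ U ≠ 0)
    (M : Matrix (Fin n) (Fin n) ℝ)
    (heig : ∃ c : ℂ, c ∈ spectrum ℂ (M.map (algebraMap ℝ ℂ)) ∧ c.re ≠ 0)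
    (T : ℝ → (Fin n → ℝ) → (Fin n → ℝ))
    (hT0 : ∀ x, T 0 x = x)
    (hTflow : ∀ x, ∀ r : ℝ, HasDerivAt (fun s => T s x) (M.mulVec (T r x)) r) :
    ∃ (r : ℝ) (A : Set (Fin n → ℝ)), MeasurableSet A ∧ μ (T r ⁻¹' A) ≠ μ A := by
  by_contra! hinv
  obtain ⟨c, hc, hre⟩ := heig
  obtain ⟨w, hw0, hw⟩ := Matrix.exists_vecMul_eq_smul_of_mem_spectrum hc
  set φ : (Fin n → ℝ) → ℂ := fun x => w ⬝ᵥ (algebraMap ℝ ℂ ∘ x)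
  have hφ : Continuous φ := by fun_prop
  have hscale : ∀ r x, ‖φ (T r x)‖ = Real.exp (c.re * r) * ‖φ x‖ := fun r x => by
    have hφT : φ (T r x) = Complex.exp (c * r) * φ x := by
      simpa only [hT0] using eq_cexp_mul_of_hasDerivAt
        (fun s => hasDerivAt_dotProduct_of_vecMul_eq_smul hw (hTflow x s)) r
    simp [hφT, Complex.norm_exp]
  have hnull := measure_pos_eq_zero_of_invariant_of_scaling hinv hφ.norm.measurable hre hscale
  obtain ⟨x, hx⟩ := exists_dotProduct_algebraMap_ne_zero hw0
  exact hsupp _ (isOpen_lt continuous_const hφ.norm) ⟨x, norm_pos_iff.2 hx⟩ hnull
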